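/- arXiv:2411.07088 — 2 statements merged into one kernel-verified Lean document; each statement's English description precedes it below -/
import Mathlib

section
/- Under a periodic policy with period T, the MAP estimate of the eavesdropper at the k-th transmission equals the normalized forward probability, which equals μ₀ P^{kT}; hence the eavesdropper's belief is the same as that of an observer who sees no transmissions at all. -/
/-- Under a periodic policy with period T, given that f_k = μ₀ P^{kT} and
b_k(s;n) = |S|⁻¹, the normalized MAP belief φ_k(s;n) = f_k(s)b_k(s;n) / Σ f b equals
μ₀ P^{kT}: the eavesdropper's belief is that of an observer seeing no transmissions. -/
theorem stmt_3 {S : Type*} [Fintype S] [DecidableEq S] [Nonempty S] (P : Matrix S S ℝ)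
    (μ₀ : S → ℝ) (f b : ℕ → S → ℝ) (φ : ℕ → S → ℝ) (T : ℕ)
    (hPnn : ∀ s' s, 0 ≤ P s' s) (hrow : ∀ s', ∑ s, P s' s = 1)
    (hμnn : ∀ s, 0 ≤ μ₀ s) (hμsum : ∑ s, μ₀ s = 1)
    (hf : ∀ k s, f k s = ∑ s', μ₀ s' * (P ^ (k * T)) s' s)
    (hb : ∀ k s, b k s = ((Fintype.card S : ℝ))⁻¹)
    (hφ : ∀ k s, φ k s = f k s * b k s / ∑ s', f k s' * b k s') :
    ∀ k s, φ k s = ∑ s', μ₀ s' * (P ^ (k * T)) s' s := by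
  have hrowpow : ∀ n : ℕ, ∀ s', ∑ s, (P ^ n) s' s = 1 := by
    intro n
    induction n with
    | zero =>
      intro s'
      simp [Matrix.one_apply]
    | succ n ih =>
      intro s'
      rw [pow_succ]
      simp only [Matrix.mul_apply]
      rw [Finset.sum_comm]
      simp only [← Finset.mul_sum, hrow, mul_one]
      exact ih s'
  intro k s
  have hfsum : ∑ s', f k s' = 1 := by
    simp only [hf]
    rw [Finset.sum_comm]
    simp only [← Finset.mul_sum, hrowpow]
    simpa using hμsum
  have hcard : ((Fintype.card S : ℝ))⁻¹ ≠ 0 := by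
    simp [Fintype.card_ne_zero]
  rw [hφ]
  simp only [hb, ← Finset.sum_mul, hfsum, one_mul]
  rw [mul_div_assoc, div_self hcard, mul_one, hf]
end

section
/- Solving a two-player zero-sum matrix game is equivalent to a linear program: for a payoff matrix M with all entries positive, the value v of the game and an optimal mixed strategy can be obtained from the LP min Σᵢ xᵢ subject to x ≥ 0, Mᵀx ≥ 1 (componentwise), with v = 1/(Σᵢ xᵢ*) at the optimum and the optimal strategy being the normalization of x*. In particular, the optimal value of this LP is attained and positive. -/
/-- Dantzig's LP formulation of a zero-sum matrix game: for a payoff matrix M with all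
entries positive, the LP  min Σ xᵢ  s.t. x ≥ 0, Mᵀx ≥ 1  has an optimal solution x*
with Σ x*ᵢ > 0, and the normalized vector x*/Σx*ᵢ is a mixed strategy guaranteeing a
payoff of at least 1/Σx*ᵢ against every pure strategy of the opponent. -/
theorem stmt_15 (m n : ℕ) (hm : 0 < m) (hn : 0 < n)
    (M : Matrix (Fin m) (Fin n) ℝ) (hM : ∀ i j, 0 < M i j) :
    ∃ x : Fin m → ℝ,
      ((∀ i, 0 ≤ x i) ∧ (∀ j, 1 ≤ ∑ i, M i j * x i)) ∧
      (∀ y : Fin m → ℝ, (∀ i, 0 ≤ y i) → (∀ j, 1 ≤ ∑ i, M i j * y i) →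
        ∑ i, x i ≤ ∑ i, y i) ∧
      0 < ∑ i, x i ∧
      ((∀ i, 0 ≤ x i / ∑ i', x i') ∧ ∑ i, x i / ∑ i', x i' = 1) ∧
      (∀ j, 1 / ∑ i', x i' ≤ ∑ i, (x i / ∑ i', x i') * M i j) := by
  haveI : Nonempty (Fin m) := ⟨⟨0, hm⟩⟩
  haveI : Nonempty (Fin n) := ⟨⟨0, hn⟩⟩
  -- column sums are positive
  set c : Fin n → ℝ := fun j => ∑ i, M i j with hc
  have hcpos : ∀ j, 0 < c j := fun j =>
    Finset.sum_pos (fun i _ => hM i j) Finset.univ_nonempty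
  set b : ℝ := Finset.univ.inf' Finset.univ_nonempty c with hb
  have hbpos : 0 < b := by
    rw [hb]
    exact (Finset.lt_inf'_iff _).2 fun j _ => hcpos j
  -- feasible point x₀
  set x₀ : Fin m → ℝ := fun _ => b⁻¹ with hx₀
  have hx₀nn : ∀ i, 0 ≤ x₀ i := fun i => le_of_lt (by positivity)
  have hx₀feas : ∀ j, 1 ≤ ∑ i, M i j * x₀ i := by
    intro j
    have : ∑ i, M i j * x₀ i = c j * b⁻¹ := by
      simp [hx₀, hc, Finset.sum_mul]
    rw [this, ← div_eq_mul_inv, le_div_iff₀ hbpos, one_mul]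
    exact Finset.inf'_le _ (Finset.mem_univ j)
  set C : ℝ := ∑ i, x₀ i with hC
  -- the truncated feasible set
  set S : Set (Fin m → ℝ) :=
    {x | (∀ i, 0 ≤ x i) ∧ (∀ j, 1 ≤ ∑ i, M i j * x i) ∧ ∑ i, x i ≤ C} with hS
  have hx₀S : x₀ ∈ S := ⟨hx₀nn, hx₀feas, le_refl _⟩
  have hf : Continuous (fun x : Fin m → ℝ => ∑ i, x i) :=
    continuous_finset_sum _ fun i _ => continuous_apply i
  have hclosed : IsClosed S := by
    have h1 : IsClosed {x : Fin m → ℝ | ∀ i, 0 ≤ x i} := by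
      have : {x : Fin m → ℝ | ∀ i, 0 ≤ x i} = ⋂ i, {x | 0 ≤ x i} := by
        ext x; simp
      rw [this]
      exact isClosed_iInter fun i => isClosed_le continuous_const (continuous_apply i)
    have h2 : IsClosed {x : Fin m → ℝ | ∀ j, 1 ≤ ∑ i, M i j * x i} := by
      have : {x : Fin m → ℝ | ∀ j, 1 ≤ ∑ i, M i j * x i}
          = ⋂ j, {x | 1 ≤ ∑ i, M i j * x i} := by ext x; simp
      rw [this]
      exact isClosed_iInter fun j => isClosed_le continuous_const
        (continuous_finset_sum _ fun i _ => continuous_const.mul (continuous_apply i))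
    have h3 : IsClosed {x : Fin m → ℝ | ∑ i, x i ≤ C} :=
      isClosed_le hf continuous_const
    have : S = {x : Fin m → ℝ | ∀ i, 0 ≤ x i}
        ∩ ({x | ∀ j, 1 ≤ ∑ i, M i j * x i} ∩ {x | ∑ i, x i ≤ C}) := by
      ext x; simp [hS, and_assoc]
    rw [this]
    exact h1.inter (h2.inter h3)
  have hsub : S ⊆ Set.Icc (fun _ => (0:ℝ)) (fun _ => C) := by
    rintro x ⟨hxnn, _, hxC⟩
    refine ⟨fun i => hxnn i, fun i => ?_⟩
    calc x i ≤ ∑ i', x i' :=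
          Finset.single_le_sum (fun i' _ => hxnn i') (Finset.mem_univ i)
      _ ≤ C := hxC
  have hScompact : IsCompact S :=
    (isCompact_Icc).of_isClosed_subset hclosed hsub
  obtain ⟨x, hxS, hxmin⟩ :=
    hScompact.exists_isMinOn ⟨x₀, hx₀S⟩ hf.continuousOn
  obtain ⟨hxnn, hxfeas, hxC⟩ := hxS
  have hmin : ∀ y : Fin m → ℝ, (∀ i, 0 ≤ y i) → (∀ j, 1 ≤ ∑ i, M i j * y i) →
      ∑ i, x i ≤ ∑ i, y i := by
    intro y hynn hyfeas
    by_cases hy : ∑ i, y i ≤ C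
    · exact hxmin ⟨hynn, hyfeas, hy⟩
    · exact hxC.trans (le_of_not_ge hy)
  have hspos : 0 < ∑ i, x i := by
    rcases lt_or_eq_of_le (Finset.sum_nonneg fun i _ => hxnn i) with h | h
    · exact h
    · exfalso
      have hx0 : ∀ i, x i = 0 := by
        intro i
        have := (Finset.sum_eq_zero_iff_of_nonneg (fun i _ => hxnn i)).1 h.symm
        exact this i (Finset.mem_univ i)
      have := hxfeas ⟨0, hn⟩
      simp [hx0] at this
      linarith
  refine ⟨x, ⟨hxnn, hxfeas⟩, hmin, hspos, ⟨fun i => div_nonneg (hxnn i) hspos.le, ?_⟩, ?_⟩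
  · rw [← Finset.sum_div, div_self hspos.ne']
  · intro j
    have h1 : ∑ i, (x i / ∑ i', x i') * M i j = (∑ i, M i j * x i) / ∑ i', x i' := by
      rw [Finset.sum_div]
      exact Finset.sum_congr rfl fun i _ => by ring
    rw [h1]
    gcongr
    exact hxfeas j
end
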